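/- For any planar point set V of size n (distinct coordinates per axis) and the increasing orders T_x^+, T_y^+, if for some k the set A = Sub_k(T_x^+) \ Sub_k(T_y^+) satisfies |A| = n/3 and the symmetric sets x_{1,3} = Sub_k(T_y^+) ∩ Sub_{n-k}(T_x^-) and x_{3,1} = Sub_k(T_x^+) ∩ Sub_{n-k}(T_y^-) (with k_{--} defined analogously) satisfy x_{1,3} = x_{3,1} = n/3 and the off-diagonal counts x_{1,2} = x_{2,1} = 0, then every length-k prefix in the mixed orientation (increasing x, decreasing y) satisfies k − |Sub_k(T_x^+) ∩ Sub_k(T_y^-)| ≤ n/3 for all n/3 ≤ k ≤ n. -/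

import Mathlib

open Finset

/-- The set of the first `k` elements of the linear order on `Fin n`
represented by the listing `T : Fin n ≃ Fin n`. -/
def prefixSet {n : ℕ} (k : ℕ) (T : Fin n ≃ Fin n) : Finset (Fin n) :=
  (Finset.univ.filter fun i : Fin n => (i : ℕ) < k).image T

lemma mem_prefixSet {n k : ℕ} {T : Fin n ≃ Fin n} {v : Fin n} :
    v ∈ prefixSet k T ↔ ((T.symm v : Fin n) : ℕ) < k := by
  simp only [prefixSet, mem_image, mem_filter, mem_univ, true_and]
  constructor
  · rintro ⟨i, hi, rfl⟩; simpa using hi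
  · intro h; exact ⟨T.symm v, h, by simp⟩

lemma card_filter_val_lt {n t : ℕ} (ht : t ≤ n) :
    (univ.filter fun i : Fin n => (i : ℕ) < t).card = t := by
  rcases eq_or_lt_of_le ht with rfl | h
  · have h : (univ.filter fun i : Fin t => (i : ℕ) < t) = univ := by
      ext i
      simp only [mem_filter, mem_univ, true_and, iff_true]
      exact i.is_lt
    rw [h, card_univ, Fintype.card_fin]
  · have heq : (univ.filter fun i : Fin n => (i : ℕ) < t) = Finset.Iio (⟨t, h⟩ : Fin n) := by
      ext i
      simp only [mem_filter, mem_univ, true_and, Finset.mem_Iio, Fin.lt_def]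
    rw [heq, Fin.card_Iio]

lemma card_filter_symm_lt {n t : ℕ} (e : Fin n ≃ Fin n) (ht : t ≤ n) :
    (univ.filter fun v => ((e.symm v : Fin n) : ℕ) < t).card = t := by
  have h : (univ.filter fun v => ((e.symm v : Fin n) : ℕ) < t)
      = (univ.filter fun i : Fin n => (i : ℕ) < t).image e := by
    ext v
    simp only [mem_image, mem_filter, mem_univ, true_and]
    constructor
    · intro h; exact ⟨e.symm v, h, by simp⟩
    · rintro ⟨i, hi, rfl⟩; simpa using hi
  rw [h, Finset.card_image_of_injective _ e.injective, card_filter_val_lt ht]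

lemma card_filter_mem_Ico_le {n a b : ℕ} (p : Fin n → ℕ) (hp : Function.Injective p) :
    (univ.filter fun v => a ≤ p v ∧ p v < b).card ≤ b - a := by
  rw [← Nat.card_Ico a b]
  apply Finset.card_le_card_of_injOn p
  · intro v hv
    simp only [mem_coe, mem_filter, mem_univ, true_and] at hv
    exact Finset.mem_Ico.mpr hv
  · exact fun x _ y _ h => hp h

lemma rank_eq {n : ℕ} (f : Fin n → ℝ) (T : Fin n ≃ Fin n)
    (hT : ∀ i j : Fin n, i < j → f (T i) < f (T j)) (v : Fin n) :
    (univ.filter fun w => f w < f v).card = ((T.symm v : Fin n) : ℕ) := by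
  have key : (univ.filter fun w => f w < f v)
      = (univ.filter fun i : Fin n => i < T.symm v).image T := by
    ext w
    simp only [mem_filter, mem_image, mem_univ, true_and]
    constructor
    · intro hw
      refine ⟨T.symm w, ?_, by simp⟩
      rcases lt_trichotomy (T.symm w) (T.symm v) with h | h | h
      · exact h
      · exfalso
        have : w = v := T.symm.injective h
        rw [this] at hw; exact lt_irrefl _ hw
      · exfalso
        have := hT _ _ h
        simp only [Equiv.apply_symm_apply] at this
        linarith
    · rintro ⟨i, hi, rfl⟩
      have := hT i (T.symm v) hi
      simpa using this
  rw [key, Finset.card_image_of_injective _ T.injective]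
  have : (univ.filter fun i : Fin n => i < T.symm v)
      = (univ.filter fun i : Fin n => (i : ℕ) < ((T.symm v : Fin n) : ℕ)) := by
    ext i
    simp only [mem_filter, mem_univ, true_and, Fin.lt_def]
  rw [this, card_filter_val_lt (le_of_lt (Fin.is_lt _))]

lemma trich {n : ℕ} (f : Fin n → ℝ) (hf : ∀ i j : Fin n, i ≠ j → f i ≠ f j) (v : Fin n) :
    (univ.filter fun w => f w < f v).card + ((univ.filter fun w => f v < f w).card + 1) = n := by
  have h1 : (univ.filter fun w => ¬ f w < f v) = insert v (univ.filter fun w => f v < f w) := by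
    ext w
    simp only [mem_filter, mem_insert, mem_univ, true_and, not_lt]
    constructor
    · intro h
      rcases eq_or_lt_of_le h with h | h
      · left
        by_contra hne
        exact hf w v hne h.symm
      · right; exact h
    · rintro (rfl | h)
      · exact le_refl _
      · exact le_of_lt h
  have h2 : v ∉ (univ.filter fun w => f v < f w) := by simp
  have h3 := Finset.card_filter_add_card_filter_not
    (s := (univ : Finset (Fin n))) (p := fun w => f w < f v)
  rw [h1, Finset.card_insert_of_notMem h2, Finset.card_univ, Fintype.card_fin] at h3
  omega

theorem stmt_15 (n : ℕ) (hn3 : 3 ∣ n) (V : Fin n → ℝ × ℝ)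
    (hx : ∀ i j : Fin n, i ≠ j → (V i).1 ≠ (V j).1)
    (hy : ∀ i j : Fin n, i ≠ j → (V i).2 ≠ (V j).2)
    (Txp Txm Typ Tym : Fin n ≃ Fin n)
    (hTxp : ∀ i j : Fin n, i < j → (V (Txp i)).1 < (V (Txp j)).1)
    (hTxm : ∀ i j : Fin n, i < j → (V (Txm j)).1 < (V (Txm i)).1)
    (hTyp : ∀ i j : Fin n, i < j → (V (Typ i)).2 < (V (Typ j)).2)
    (hTym : ∀ i j : Fin n, i < j → (V (Tym j)).2 < (V (Tym i)).2)
    (kpp : ℕ) (hkpp : kpp ≤ n)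
    (hA : (prefixSet kpp Txp \ prefixSet kpp Typ).card = n / 3)
    (h13 : (prefixSet kpp Typ ∩ prefixSet (n - kpp) Txm).card = n / 3)
    (h31 : (prefixSet kpp Txp ∩ prefixSet (n - kpp) Tym).card = n / 3)
    (h12 : (prefixSet kpp Typ \ (prefixSet kpp Txp ∪ prefixSet (n - kpp) Txm)).card = 0)
    (h21 : (prefixSet kpp Txp \ (prefixSet kpp Typ ∪ prefixSet (n - kpp) Tym)).card = 0) :
    ∀ k : ℕ, n / 3 ≤ k → k ≤ n →
      k - (prefixSet k Txp ∩ prefixSet k Tym).card ≤ n / 3 := by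
  intro k hk1 hk2
  set m := n / 3 with hm
  have hnm : n = 3 * m := (Nat.div_mul_cancel hn3).symm ▸ by omega
  have hryinj : Function.Injective (fun v : Fin n => ((Typ.symm v : Fin n) : ℕ)) :=
    fun a b h => Typ.symm.injective (Fin.val_injective h)
  have hrxinj : Function.Injective (fun v : Fin n => ((Txp.symm v : Fin n) : ℕ)) :=
    fun a b h => Txp.symm.injective (Fin.val_injective h)
  -- sum identity for y-ranks
  have hysum : ∀ v : Fin n, ((Typ.symm v : Fin n) : ℕ) + ((Tym.symm v : Fin n) : ℕ) + 1 = n := by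
    intro v
    have r1 := rank_eq (fun w => (V w).2) Typ hTyp v
    have r2 := rank_eq (fun w => -(V w).2) Tym (fun i j hij => by
      have := hTym i j hij; simpa using this) v
    have heq : (univ.filter fun w => -(V w).2 < -(V v).2)
        = (univ.filter fun w => (V v).2 < (V w).2) := by
      ext w
      simp only [mem_filter, mem_univ, true_and, neg_lt_neg_iff]
    rw [heq] at r2
    have t := trich (fun w => (V w).2) hy v
    rw [r1, r2] at t
    omega
  -- membership characterizations
  have memXp : ∀ (t : ℕ) (v : Fin n), v ∈ prefixSet t Txp ↔ ((Txp.symm v : Fin n) : ℕ) < t := fun t v => mem_prefixSet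
  have memYp : ∀ (t : ℕ) (v : Fin n), v ∈ prefixSet t Typ ↔ ((Typ.symm v : Fin n) : ℕ) < t := fun t v => mem_prefixSet
  have memYm : ∀ v : Fin n, v ∈ prefixSet k Tym ↔ ¬ ((Typ.symm v : Fin n) : ℕ) < n - k := by
    intro v
    rw [mem_prefixSet]
    have := hysum v
    omega
  -- cardinalities of rank-threshold sets
  have cardRx : ∀ t : ℕ, t ≤ n → (univ.filter fun v => ((Txp.symm v : Fin n) : ℕ) < t).card = t := fun t ht =>
    card_filter_symm_lt Txp ht
  have cardRy : ∀ t : ℕ, t ≤ n → (univ.filter fun v => ((Typ.symm v : Fin n) : ℕ) < t).card = t := fun t ht =>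
    card_filter_symm_lt Typ ht
  -- b set
  have hb : (univ.filter fun v => ((Txp.symm v : Fin n) : ℕ) < kpp ∧ ¬ ((Typ.symm v : Fin n) : ℕ) < kpp).card = m := by
    rw [← hA]
    congr 1
    ext v
    simp only [mem_sdiff, memXp, memYp, mem_filter, mem_univ, true_and]
  -- splitting lemma
  have split : ∀ (p q : Fin n → Prop) (_ : DecidablePred p) (_ : DecidablePred q),
      (univ.filter fun v => p v ∧ q v).card + (univ.filter fun v => p v ∧ ¬ q v).card
        = (univ.filter fun v => p v).card := by
    intro p q _ _
    have h := Finset.card_filter_add_card_filter_not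
      (s := univ.filter fun v => p v) (p := fun v => q v)
    rw [Finset.filter_filter, Finset.filter_filter] at h
    exact h
  -- m ≤ kpp
  have hmk : m ≤ kpp := by
    have hsub : (univ.filter fun v => ((Txp.symm v : Fin n) : ℕ) < kpp ∧ ¬ ((Typ.symm v : Fin n) : ℕ) < kpp)
        ⊆ (univ.filter fun v => ((Txp.symm v : Fin n) : ℕ) < kpp) := by
      intro v hv
      simp only [mem_filter, mem_univ, true_and] at hv ⊢
      exact hv.1
    have h := Finset.card_le_card hsub
    rw [hb, cardRx kpp hkpp] at h
    exact h
  -- m ≤ n - kpp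
  have hmk2 : m + kpp ≤ n := by
    have hc : (univ.filter fun v => ¬ ((Typ.symm v : Fin n) : ℕ) < kpp).card = n - kpp := by
      have h := Finset.card_filter_add_card_filter_not
        (s := (univ : Finset (Fin n))) (p := fun v => ((Typ.symm v : Fin n) : ℕ) < kpp)
      rw [cardRy kpp hkpp, Finset.card_univ, Fintype.card_fin] at h
      omega
    have : (univ.filter fun v => ((Txp.symm v : Fin n) : ℕ) < kpp ∧ ¬ ((Typ.symm v : Fin n) : ℕ) < kpp).card
        ≤ (univ.filter fun v => ¬ ((Typ.symm v : Fin n) : ℕ) < kpp).card := by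
      apply Finset.card_le_card
      intro v hv
      simp only [mem_filter, mem_univ, true_and] at hv ⊢
      exact hv.2
    rw [hb, hc] at this
    omega
  -- card of a
  have ha : (univ.filter fun v => ((Txp.symm v : Fin n) : ℕ) < kpp ∧ ((Typ.symm v : Fin n) : ℕ) < kpp).card = kpp - m := by
    have h := split (fun v => ((Txp.symm v : Fin n) : ℕ) < kpp) (fun v => ((Typ.symm v : Fin n) : ℕ) < kpp) inferInstance inferInstance
    rw [hb, cardRx kpp hkpp] at h
    omega
  -- the goal set
  have hI : (prefixSet k Txp ∩ prefixSet k Tym)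
      = univ.filter fun v => ((Txp.symm v : Fin n) : ℕ) < k ∧ ¬ ((Typ.symm v : Fin n) : ℕ) < n - k := by
    ext v
    simp only [mem_inter, memXp, memYm, mem_filter, mem_univ, true_and]
  set S := univ.filter fun v => ((Txp.symm v : Fin n) : ℕ) < k ∧ ((Typ.symm v : Fin n) : ℕ) < n - k with hS
  have hsplit : S.card + (prefixSet k Txp ∩ prefixSet k Tym).card = k := by
    rw [hI]
    have h := split (fun v => ((Txp.symm v : Fin n) : ℕ) < k) (fun v => ((Typ.symm v : Fin n) : ℕ) < n - k) inferInstance inferInstance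
    rw [cardRx k hk2] at h
    exact h
  -- bound S.card
  have bound1 : S.card ≤ (kpp - m) + ((n - k) - kpp) + (k - kpp) := by
    have e1 : (((S.filter fun v => ((Txp.symm v : Fin n) : ℕ) < kpp)).filter fun v => ((Typ.symm v : Fin n) : ℕ) < kpp).card ≤ kpp - m := by
      rw [← ha]
      apply Finset.card_le_card
      intro v hv
      simp only [hS, mem_filter, mem_univ, true_and] at hv ⊢
      exact ⟨hv.1.2, hv.2⟩
    have e2 : (((S.filter fun v => ((Txp.symm v : Fin n) : ℕ) < kpp)).filter fun v => ¬ ((Typ.symm v : Fin n) : ℕ) < kpp).card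
        ≤ (n - k) - kpp := by
      calc (((S.filter fun v => ((Txp.symm v : Fin n) : ℕ) < kpp)).filter fun v => ¬ ((Typ.symm v : Fin n) : ℕ) < kpp).card
          ≤ (univ.filter fun v => kpp ≤ ((Typ.symm v : Fin n) : ℕ) ∧ ((Typ.symm v : Fin n) : ℕ) < n - k).card := by
            apply Finset.card_le_card
            intro v hv
            simp only [hS, mem_filter, mem_univ, true_and] at hv ⊢
            omega
        _ ≤ (n - k) - kpp := card_filter_mem_Ico_le _ hryinj
    have e3 : (S.filter fun v => ¬ (((Txp.symm v : Fin n) : ℕ) < kpp)).card ≤ k - kpp := by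
      calc (S.filter fun v => ¬ (((Txp.symm v : Fin n) : ℕ) < kpp)).card
          ≤ (univ.filter fun v => kpp ≤ ((Txp.symm v : Fin n) : ℕ) ∧ ((Txp.symm v : Fin n) : ℕ) < k).card := by
            apply Finset.card_le_card
            intro v hv
            simp only [hS, mem_filter, mem_univ, true_and] at hv ⊢
            omega
        _ ≤ k - kpp := card_filter_mem_Ico_le _ hrxinj
    have s1 := Finset.card_filter_add_card_filter_not
      (s := S) (p := fun v => ((Txp.symm v : Fin n) : ℕ) < kpp)
    have s2 := Finset.card_filter_add_card_filter_not
      (s := S.filter fun v => ((Txp.symm v : Fin n) : ℕ) < kpp) (p := fun v => ((Typ.symm v : Fin n) : ℕ) < kpp)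
    omega
  have bound2 : S.card ≤ n - k := by
    calc S.card ≤ (univ.filter fun v => ((Typ.symm v : Fin n) : ℕ) < n - k).card := by
          apply Finset.card_le_card
          intro v hv
          simp only [hS, mem_filter, mem_univ, true_and] at hv ⊢
          exact hv.2
      _ = n - k := cardRy (n - k) (by omega)
  omega
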